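/- For every integer k ≥ 2, writing D_{k,ω} = τ_{2/k} ∗ g_k as a Dirichlet convolution (where g_k is the multiplicative function determined by this identity), the Dirichlet series ∑_{d=1}^∞ |g_k(d)|/d^σ converges for every real σ > 1/2. -/

import Mathlib

/-!
Since `τ_z ∗ τ_w = τ_{z+w}` (Vandermonde's identity for multiset coefficients) and `τ_0 = 1`,
`g_k = τ_{-2/k} ∗ D_{k,ω}` is multiplicative. At a prime `g_k(p) = D_{k,ω}(p) - 2/k = 0`, so
`g_k` is supported on powerful numbers, and `|g_k(p^α)| ≤ (α+1)^2` gives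
`|g_k(n)| ≤ d(n)^2 ≪ n^ε`. Powerful numbers have the form `a^2 b^3`, so `∑_{n powerful} n^{-s}`
converges for `s > 1/2`.
-/

/-- `D k n = d(n) / k^{ω(n)}` as a real number. -/
noncomputable def Dkω (k n : ℕ) : ℝ :=
  (n.divisors.card : ℝ) / (k : ℝ) ^ n.primeFactors.card

/-- The generalized divisor function `τ_z` for real `z`, defined multiplicatively by
`τ_z(p^α) = binom(z+α−1, α) = z(z+1)⋯(z+α−1)/α!` on prime powers. -/
noncomputable def tauzR (z : ℝ) (n : ℕ) : ℝ :=
  ∏ p ∈ n.primeFactors,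
    (∏ i ∈ Finset.range (n.factorization p), (z + (i : ℝ))) /
      ((n.factorization p).factorial : ℝ)

open Finset ArithmeticFunction

theorem add_multichoose_eq {R : Type*} [CommRing R] [BinomialRing R] (r s : R) (k : ℕ) :
    Ring.multichoose (r + s) k =
      ∑ ij ∈ antidiagonal k, Ring.multichoose r ij.1 * Ring.multichoose s ij.2 := by
  have h := Ring.add_choose_eq k (Commute.all (-r) (-s))
  rw [← neg_add, Ring.choose_neg'] at h
  rw [← smul_left_cancel_iff ((k : ℤ).negOnePow), h, smul_sum]
  refine sum_congr rfl fun ij hij => ?_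
  rw [HasAntidiagonal.mem_antidiagonal] at hij
  rw [Ring.choose_neg', Ring.choose_neg', smul_mul_smul_comm, ← Int.negOnePow_add, ← hij]
  push_cast; rfl

theorem ascPochhammer_eval_eq_prod_range {R : Type*} [CommSemiring R] (n : ℕ) (r : R) :
    (ascPochhammer R n).eval r = ∏ i ∈ range n, (r + i) := by
  induction n with
  | zero => simp
  | succ n ih => simp [ascPochhammer_succ_right, ih, prod_range_succ]

theorem multichoose_eq_prod_div {K : Type*} [Field K] [CharZero K] (r : K) (n : ℕ) :
    Ring.multichoose r n = (∏ i ∈ range n, (r + i)) / n.factorial := by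
  have h := Ring.factorial_nsmul_multichoose_eq_ascPochhammer r n
  rw [Polynomial.ascPochhammer_smeval_eq_eval, nsmul_eq_mul,
    ascPochhammer_eval_eq_prod_range] at h
  rw [eq_div_iff (Nat.cast_ne_zero.mpr n.factorial_ne_zero), mul_comm, h]

theorem abs_multichoose_neg_le_one {z : ℝ} (h0 : 0 ≤ z) (h1 : z ≤ 1) (n : ℕ) :
    |Ring.multichoose (-z) n| ≤ 1 := by
  rw [multichoose_eq_prod_div, abs_div, abs_prod, Nat.abs_cast,
    div_le_one (by positivity), ← prod_range_add_one_eq_factorial, Nat.cast_prod]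
  refine prod_le_prod (fun i _ => abs_nonneg _) fun i _ => abs_le.mpr ⟨?_, ?_⟩ <;> push_cast <;>
    linarith

namespace ArithmeticFunction

theorem mul_apply_prime_pow {R : Type*} [Semiring R] (f g : ArithmeticFunction R) {p : ℕ}
    (hp : p.Prime) (k : ℕ) :
    (f * g) (p ^ k) = ∑ ij ∈ antidiagonal k, f (p ^ ij.1) * g (p ^ ij.2) := by
  rw [mul_apply, Nat.sum_divisorsAntidiagonal (f := fun a b => f a * g b),
    Nat.sum_divisors_prime_pow hp, Nat.sum_antidiagonal_eq_sum_range_succ_mk]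
  refine sum_congr rfl fun j hj => ?_
  rw [Nat.pow_div (Nat.lt_succ_iff.mp (mem_range.mp hj)) hp.pos]

variable {R : Type*} [CommMonoidWithZero R]

def ofFactorization (h : ℕ → ℕ → R) : ArithmeticFunction R :=
  ⟨fun n => if n = 0 then 0 else n.factorization.prod h, if_pos rfl⟩

theorem ofFactorization_apply {h : ℕ → ℕ → R} {n : ℕ} (hn : n ≠ 0) :
    ofFactorization h n = n.factorization.prod h :=
  if_neg hn

theorem isMultiplicative_ofFactorization (h : ℕ → ℕ → R) :
    (ofFactorization h).IsMultiplicative := by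
  refine ⟨by simp [ofFactorization_apply], fun {m n} hmn => ?_⟩
  rcases eq_or_ne m 0 with rfl | hm
  · simp [Nat.coprime_zero_left _ |>.mp hmn]
  rcases eq_or_ne n 0 with rfl | hn
  · simp [Nat.coprime_zero_right _ |>.mp hmn]
  rw [ofFactorization_apply (mul_ne_zero hm hn), ofFactorization_apply hm,
    ofFactorization_apply hn, Nat.factorization_mul_of_coprime hmn,
    Finsupp.prod_add_index_of_disjoint]
  simpa only [Nat.support_factorization] using hmn.disjoint_primeFactors

theorem ofFactorization_apply_prime_pow {h : ℕ → ℕ → R} {p : ℕ} (hp : p.Prime)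
    (h0 : h p 0 = 1) (k : ℕ) : ofFactorization h (p ^ k) = h p k := by
  rw [ofFactorization_apply (pow_ne_zero _ hp.ne_zero), hp.factorization_pow,
    Finsupp.prod_single_index h0]

end ArithmeticFunction

noncomputable def tauz (z : ℝ) : ArithmeticFunction ℝ :=
  ofFactorization fun _ k => Ring.multichoose z k

theorem tauz_apply {z : ℝ} {n : ℕ} (hn : n ≠ 0) : tauz z n = tauzR z n := by
  simp only [tauz, ofFactorization_apply hn, Finsupp.prod, Nat.support_factorization,
    multichoose_eq_prod_div, tauzR]

theorem isMultiplicative_tauz (z : ℝ) : (tauz z).IsMultiplicative :=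
  isMultiplicative_ofFactorization _

theorem tauz_apply_prime_pow (z : ℝ) {p : ℕ} (hp : p.Prime) (k : ℕ) :
    tauz z (p ^ k) = Ring.multichoose z k :=
  ofFactorization_apply_prime_pow hp (Ring.multichoose_zero_right z) k

theorem tauz_mul_tauz (z w : ℝ) : tauz z * tauz w = tauz (z + w) := by
  refine ((isMultiplicative_tauz z).mul (isMultiplicative_tauz w)).eq_iff_eq_on_prime_powers _ _
    (isMultiplicative_tauz _) |>.mpr fun p k hp => ?_
  simp only [mul_apply_prime_pow _ _ hp, tauz_apply_prime_pow _ hp, add_multichoose_eq]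

theorem tauz_zero : tauz 0 = 1 := by
  refine (isMultiplicative_tauz 0).eq_iff_eq_on_prime_powers _ _ isMultiplicative_one
    |>.mpr fun p k hp => ?_
  rw [tauz_apply_prime_pow _ hp]
  cases k with
  | zero => simp
  | succ k => simp [Ring.multichoose_zero_succ, hp.ne_one]

theorem Dkω_eq_factorization_prod (k : ℕ) {n : ℕ} (hn : n ≠ 0) :
    Dkω k n = n.factorization.prod fun _ α => ((α : ℝ) + 1) / k := by
  rw [Dkω, Nat.card_divisors hn, Finsupp.prod, Nat.support_factorization, prod_div_distrib,
    prod_const]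
  push_cast
  rfl

noncomputable def Dk (k : ℕ) : ArithmeticFunction ℝ :=
  ofFactorization fun _ α => ((α : ℝ) + 1) / k

theorem Dk_apply (k n : ℕ) : Dk k n = Dkω k n := by
  rcases eq_or_ne n 0 with rfl | hn
  · simp [Dkω]
  · rw [Dk, ofFactorization_apply hn, Dkω_eq_factorization_prod k hn]

theorem isMultiplicative_Dk (k : ℕ) : (Dk k).IsMultiplicative :=
  isMultiplicative_ofFactorization _

theorem Dk_apply_prime_pow (k : ℕ) {p : ℕ} (hp : p.Prime) {α : ℕ} (hα : α ≠ 0) :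
    Dk k (p ^ α) = ((α : ℝ) + 1) / k := by
  rw [Dk_apply, Dkω, Nat.divisors_prime_pow hp, card_map, card_range,
    Nat.primeFactors_prime_pow hα hp, card_singleton, pow_one]
  push_cast
  ring

theorem abs_Dk_apply_prime_pow_le {k p : ℕ} (hk : k ≠ 0) (hp : p.Prime) (j : ℕ) :
    |Dk k (p ^ j)| ≤ j + 1 := by
  rcases eq_or_ne j 0 with rfl | hj
  · simp [(isMultiplicative_Dk k).map_one]
  rw [Dk_apply_prime_pow k hp hj, abs_div, Nat.abs_cast, abs_of_nonneg (by positivity)]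
  exact div_le_self (by positivity) (by exact_mod_cast Nat.one_le_iff_ne_zero.mpr hk)

noncomputable def gk (k : ℕ) : ArithmeticFunction ℝ :=
  tauz (-(2 / k)) * Dk k

theorem isMultiplicative_gk (k : ℕ) : (gk k).IsMultiplicative :=
  (isMultiplicative_tauz _).mul (isMultiplicative_Dk k)

theorem eq_gk_of_tauzR_convolution {k : ℕ} {g : ℕ → ℝ}
    (hg : ∀ n : ℕ, 0 < n → Dkω k n = ∑ d ∈ n.divisors, tauzR (2 / (k : ℝ)) d * g (n / d))
    {n : ℕ} (hn : n ≠ 0) : g n = gk k n := by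
  let G : ArithmeticFunction ℝ := ⟨fun n => if n = 0 then 0 else g n, if_pos rfl⟩
  have hG : tauz (2 / k) * G = Dk k := by
    ext m
    rcases eq_or_ne m 0 with rfl | hm
    · simp
    rw [mul_apply, Nat.sum_divisorsAntidiagonal fun a b => tauz (2 / k) a * G b, Dk_apply,
      hg m (Nat.pos_of_ne_zero hm)]
    refine sum_congr rfl fun d hd => ?_
    have hd0 : d ≠ 0 := Nat.ne_of_gt (Nat.pos_of_mem_divisors hd)
    have hmd : m / d ≠ 0 := (Nat.div_pos (Nat.divisor_le hd) (Nat.pos_of_ne_zero hd0)).ne'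
    simp [G, tauz_apply hd0, hmd]
  have hGg : G = gk k := by
    rw [gk, ← hG, ← mul_assoc, tauz_mul_tauz, neg_add_cancel, tauz_zero, one_mul]
  simpa [G, hn] using congrArg (· n) hGg

theorem gk_apply_prime {k p : ℕ} (hp : p.Prime) : gk k p = 0 := by
  rw [← pow_one p, gk, mul_apply_prime_pow _ _ hp, Nat.sum_antidiagonal_succ,
    Nat.antidiagonal_zero, sum_singleton]
  simp only [tauz_apply_prime_pow _ hp, zero_add, Dk_apply_prime_pow k hp one_ne_zero, pow_zero,
    (isMultiplicative_Dk k).map_one, (isMultiplicative_tauz _).map_one,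
    Ring.multichoose_one_right]
  push_cast
  ring

theorem abs_gk_apply_prime_pow_le {k p : ℕ} (hk : 2 ≤ k) (hp : p.Prime) (α : ℕ) :
    |gk k (p ^ α)| ≤ ((α : ℝ) + 1) ^ 2 := by
  have hterm : ∀ ij ∈ antidiagonal α,
      |tauz (-(2 / k)) (p ^ ij.1) * Dk k (p ^ ij.2)| ≤ 1 * ((α : ℝ) + 1) := by
    intro ij hij
    have hj : (ij.2 : ℝ) ≤ α := by
      exact_mod_cast (HasAntidiagonal.mem_antidiagonal.mp hij) ▸ Nat.le_add_left ij.2 ij.1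
    have hz : |tauz (-(2 / k)) (p ^ ij.1)| ≤ 1 := by
      have hk' : (2 : ℝ) ≤ k := by exact_mod_cast hk
      rw [tauz_apply_prime_pow _ hp]
      exact abs_multichoose_neg_le_one (by positivity) ((div_le_one (by positivity)).mpr hk') _
    rw [abs_mul]
    exact mul_le_mul hz ((abs_Dk_apply_prime_pow_le (by omega) hp _).trans (by linarith))
      (abs_nonneg _) zero_le_one
  calc |gk k (p ^ α)|
      ≤ ∑ ij ∈ antidiagonal α, |tauz (-(2 / k)) (p ^ ij.1) * Dk k (p ^ ij.2)| := by
        rw [gk, mul_apply_prime_pow _ _ hp]; exact abs_sum_le_sum_abs _ _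
    _ ≤ ∑ ij ∈ antidiagonal α, 1 * ((α : ℝ) + 1) := sum_le_sum hterm
    _ = ((α : ℝ) + 1) ^ 2 := by rw [sum_const, Nat.card_antidiagonal]; ring

/-- No prime divides `n` exactly once (`0` counts as powerful). -/
def IsPowerful (n : ℕ) : Prop := ∀ p, n.factorization p ≠ 1

theorem gk_eq_zero_of_not_isPowerful (k : ℕ) {n : ℕ} (h : ¬IsPowerful n) : gk k n = 0 := by
  obtain ⟨p, hp⟩ : ∃ p, n.factorization p = 1 := by simpa [IsPowerful] using h
  have hn : n ≠ 0 := by rintro rfl; simp at hp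
  have hpn : p ∈ n.primeFactors := by
    rw [← Nat.support_factorization, Finsupp.mem_support_iff, hp]; exact one_ne_zero
  rw [(isMultiplicative_gk k).multiplicative_factorization _ hn, Finsupp.prod,
    Nat.support_factorization]
  exact prod_eq_zero hpn (by rw [hp, pow_one, gk_apply_prime (Nat.prime_of_mem_primeFactors hpn)])

theorem succ_mul_le_pow {δ x : ℝ} (hδ : 0 ≤ δ) (hδ1 : δ ≤ 1) (hx : 1 + δ ≤ x) (α : ℕ) :
    (α + 1) * δ ≤ x ^ α :=
  calc (α + 1) * δ ≤ 1 + α * δ := by nlinarith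
    _ ≤ (1 + δ) ^ α := one_add_mul_le_pow (by linarith) α
    _ ≤ x ^ α := pow_le_pow_left₀ (by linarith) hx α

theorem rpow_eq_prod_primeFactors {n : ℕ} (hn : n ≠ 0) (ε : ℝ) :
    (n : ℝ) ^ ε = ∏ p ∈ n.primeFactors, ((p : ℝ) ^ ε) ^ n.factorization p := by
  conv_lhs => rw [← Nat.prod_factorization_pow_eq_self hn]
  rw [Finsupp.prod, Nat.support_factorization, Nat.cast_prod, ← Real.finsetProd_rpow _ _
    (fun _ _ => by positivity)]
  push_cast
  exact prod_congr rfl fun p _ => (Real.rpow_pow_comm (Nat.cast_nonneg p) ε _).symm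

theorem card_divisors_le_mul_rpow {ε : ℝ} (hε : 0 < ε) :
    ∃ C, ∀ n : ℕ, n ≠ 0 → (#n.divisors : ℝ) ≤ C * (n : ℝ) ^ ε := by
  -- By Bernoulli, `(α + 1) δ ≤ p^{εα}` for every prime `p`; once `p^ε ≥ 2` this holds with
  -- `δ = 1`, so only the primes below `B` cost a factor `δ⁻¹`.
  set δ : ℝ := min 1 (2 ^ ε - 1)
  have hδ : 0 < δ := lt_min one_pos (by linarith [Real.one_lt_rpow one_lt_two hε])
  set B := ⌈(2 : ℝ) ^ ε⁻¹⌉₊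
  refine ⟨δ⁻¹ ^ B, fun n hn => ?_⟩
  have hprime : ∀ p ∈ n.primeFactors, ((n.factorization p : ℝ) + 1) ≤
      (if p < B then δ⁻¹ else 1) * ((p : ℝ) ^ ε) ^ n.factorization p := by
    intro p hp
    have hp2 : (2 : ℝ) ≤ p := by exact_mod_cast (Nat.prime_of_mem_primeFactors hp).two_le
    have h2p : (2 : ℝ) ^ ε ≤ (p : ℝ) ^ ε := Real.rpow_le_rpow zero_le_two hp2 hε.le
    split_ifs with hpB
    · rw [inv_mul_eq_div, le_div_iff₀ hδ]
      exact succ_mul_le_pow hδ.le (min_le_left _ _)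
        (by linarith [min_le_right (1 : ℝ) (2 ^ ε - 1)]) _
    · have hBp : (2 : ℝ) ^ ε⁻¹ ≤ p := (Nat.le_ceil _).trans (by exact_mod_cast not_lt.mp hpB)
      have : 2 ≤ (p : ℝ) ^ ε := by
        calc (2 : ℝ) = ((2 : ℝ) ^ ε⁻¹) ^ ε := by
              rw [← Real.rpow_mul zero_le_two, inv_mul_cancel₀ hε.ne', Real.rpow_one]
          _ ≤ (p : ℝ) ^ ε := Real.rpow_le_rpow (by positivity) hBp hε.le
      simpa using succ_mul_le_pow zero_le_one le_rfl (by linarith) (n.factorization p)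
  have hsmall : #(n.primeFactors.filter (· < B)) ≤ B :=
    (card_le_card fun p hp => mem_range.mpr (mem_filter.mp hp).2).trans (card_range B).le
  calc (#n.divisors : ℝ) = ∏ p ∈ n.primeFactors, ((n.factorization p : ℝ) + 1) := by
        rw [Nat.card_divisors hn]; push_cast; rfl
    _ ≤ ∏ p ∈ n.primeFactors, (if p < B then δ⁻¹ else 1) * ((p : ℝ) ^ ε) ^ n.factorization p :=
        prod_le_prod (fun _ _ => by positivity) hprime
    _ = δ⁻¹ ^ #(n.primeFactors.filter (· < B)) * (n : ℝ) ^ ε := by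
        rw [prod_mul_distrib, ← prod_filter, prod_const, rpow_eq_prod_primeFactors hn]
    _ ≤ δ⁻¹ ^ B * (n : ℝ) ^ ε := by
        gcongr
        · exact one_le_inv₀ hδ |>.mpr (min_le_left _ _)

theorem abs_gk_le_sq_card_divisors {k n : ℕ} (hk : 2 ≤ k) (hn : n ≠ 0) :
    |gk k n| ≤ (#n.divisors : ℝ) ^ 2 := by
  rw [(isMultiplicative_gk k).multiplicative_factorization _ hn, Finsupp.prod, abs_prod,
    Nat.card_divisors hn, Nat.support_factorization]
  push_cast
  rw [← prod_pow]
  exact prod_le_prod (fun _ _ => abs_nonneg _) fun p hp =>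
    abs_gk_apply_prime_pow_le hk (Nat.prime_of_mem_primeFactors hp) _

theorem abs_gk_le_mul_rpow {k : ℕ} (hk : 2 ≤ k) {ε : ℝ} (hε : 0 < ε) :
    ∃ C, ∀ n : ℕ, n ≠ 0 → |gk k n| ≤ C * (n : ℝ) ^ ε := by
  obtain ⟨C, hC⟩ := card_divisors_le_mul_rpow (half_pos hε)
  refine ⟨C ^ 2, fun n hn => (abs_gk_le_sq_card_divisors hk hn).trans ?_⟩
  calc (#n.divisors : ℝ) ^ 2 ≤ (C * (n : ℝ) ^ (ε / 2)) ^ 2 := by gcongr; exact hC n hn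
    _ = C ^ 2 * (n : ℝ) ^ ε := by
        rw [mul_pow, ← Real.rpow_mul_natCast (by positivity)]
        norm_num

theorem IsPowerful.exists_sq_mul_cube {n : ℕ} (h : IsPowerful n) : ∃ a b, a ^ 2 * b ^ 3 = n := by
  rcases eq_or_ne n 0 with rfl | hn
  · exact ⟨0, 0, rfl⟩
  refine ⟨n.factorization.prod fun p α => p ^ ((α - 3 * (α % 2)) / 2),
    n.factorization.prod fun p α => p ^ (α % 2), ?_⟩
  -- each exponent `α ≠ 1` is `2 * ((α - 3 * (α % 2)) / 2) + 3 * (α % 2)`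
  conv_rhs => rw [← Nat.prod_factorization_pow_eq_self hn]
  simp only [Finsupp.prod, ← prod_pow, ← prod_mul_distrib, ← pow_mul, ← pow_add]
  refine prod_congr rfl fun p _ => congrArg (p ^ ·) ?_
  have := h p
  omega

theorem summable_indicator_isPowerful_rpow {s : ℝ} (hs : 1 / 2 < s) :
    Summable ({n | IsPowerful n}.indicator fun n : ℕ => (n : ℝ) ^ (-s)) := by
  rw [← summable_subtype_iff_indicator]
  choose a b hab using fun n : {n | IsPowerful n} => n.2.exists_sq_mul_cube
  have hinj : Function.Injective fun n => (a n, b n) := fun m n hmn => by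
    simp only [Prod.mk.injEq] at hmn
    exact Subtype.ext (by rw [← hab m, ← hab n, hmn.1, hmn.2])
  have hsum : Summable fun ab : ℕ × ℕ => (ab.1 : ℝ) ^ (-(2 * s)) * (ab.2 : ℝ) ^ (-(3 * s)) :=
    .mul_of_nonneg (Real.summable_nat_rpow.mpr (by linarith))
      (Real.summable_nat_rpow.mpr (by linarith)) (fun _ => by positivity) fun _ => by positivity
  refine (hsum.comp_injective hinj).congr fun n => ?_
  simp only [Function.comp_apply, ← hab n]
  push_cast
  rw [Real.mul_rpow (by positivity) (by positivity), ← Real.rpow_natCast_mul (by positivity),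
    ← Real.rpow_natCast_mul (by positivity)]
  ring_nf

theorem summable_abs_div_rpow_of_isPowerful {f : ℕ → ℝ} (hf : ∀ n, ¬IsPowerful n → f n = 0)
    (hbound : ∀ ε : ℝ, 0 < ε → ∃ C, ∀ n : ℕ, n ≠ 0 → |f n| ≤ C * (n : ℝ) ^ ε) {σ : ℝ}
    (hσ : 1 / 2 < σ) : Summable fun n : ℕ => |f n| / (n : ℝ) ^ σ := by
  obtain ⟨ε, hε, hs⟩ : ∃ ε : ℝ, 0 < ε ∧ 1 / 2 < σ - ε := ⟨(σ - 1 / 2) / 2, by linarith, by linarith⟩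
  obtain ⟨C, hC⟩ := hbound ε hε
  refine .of_nonneg_of_le (fun n => by positivity) (fun n => ?_)
    ((summable_indicator_isPowerful_rpow hs).mul_left C)
  by_cases hn : IsPowerful n
  · rw [Set.indicator_of_mem (Set.mem_ofPred.mpr hn)]
    rcases eq_or_ne n 0 with rfl | hn0
    · simp [Real.zero_rpow (by linarith : σ ≠ 0), Real.zero_rpow (by linarith : ε - σ ≠ 0)]
    rw [div_le_iff₀ (by positivity), mul_assoc, ← Real.rpow_add (by positivity), neg_sub,
      sub_add_cancel]
    exact hC n hn0
  · simp [hf n hn, Set.indicator_of_notMem (s := {n | IsPowerful n}) hn]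

/-- For `k ≥ 2`, if `g` is the arithmetic function with `D_{k,ω} = τ_{2/k} ∗ g`
(Dirichlet convolution), then `∑_d |g(d)|/d^σ` converges for every real `σ > 1/2`. -/
theorem summable_gk (k : ℕ) (hk : 2 ≤ k) (g : ℕ → ℝ)
    (hg : ∀ n : ℕ, 0 < n →
      Dkω k n = ∑ d ∈ n.divisors, tauzR (2 / (k : ℝ)) d * g (n / d)) :
    ∀ σ : ℝ, 1 / 2 < σ →
      Summable (fun d : ℕ => |g (d + 1)| / ((d : ℝ) + 1) ^ σ) := by
  intro σ hσ
  have hsum : Summable fun n : ℕ => |gk k n| / (n : ℝ) ^ σ :=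
    summable_abs_div_rpow_of_isPowerful (fun _ => gk_eq_zero_of_not_isPowerful k)
      (fun _ => abs_gk_le_mul_rpow hk) hσ
  refine ((summable_nat_add_iff 1).mpr hsum).congr fun d => ?_
  rw [eq_gk_of_tauzR_convolution hg d.succ_ne_zero]
  push_cast
  rfl
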